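/- Let f, g : (ℂⁿ,0) → (ℂ,0) be holomorphic germs such that f·conj(g) has an isolated critical value at 0. Then the critical set of the real-analytic map f·conj(g) equals the critical set of the holomorphic product fg, namely {z : ∂(fg)/∂zᵢ(z) = 0 for all i = 1, …, n}. In particular the critical set of f·conj(g) is a complex analytic variety. -/

import Mathlib

/-!
At a point put `p = f z`, `q = g z`, `F = df z`, `G = dg z`. The real differential of `f * conj g`
is `v ↦ conj q * F v + p * conj (G v)`, that of `f * g` is `q • F + p • G`.
If `q • F + p • G = 0`, then `conj p * q` times the real differential is purely imaginary, so its
image lies in a real line (or it vanishes when `p * q = 0`). Conversely, at a critical point of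
`f * conj g` the isolated critical value forces `p * conj q = 0`; the real differential is then a
complex-linear (`p = 0`) or antilinear (`q = 0`) functional, which is onto unless it vanishes.
-/

open ComplexConjugate Function

theorem LinearMapClass.forall_apply_single_one_eq_zero_iff {R ι M L : Type*} [Semiring R]
    [Finite ι] [DecidableEq ι] [AddCommMonoid M] [Module R M] [FunLike L (ι → R) M]
    [LinearMapClass L R (ι → R) M] (φ : L) :
    (∀ i, φ (Pi.single i 1) = 0) ↔ ∀ v, φ v = 0 := by
  refine ⟨fun h v => ?_, fun h i => h _⟩
  have : (φ : (ι → R) →ₗ[R] M) = 0 := (Pi.basisFun R ι).ext fun i => by simpa using h i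
  exact LinearMap.congr_fun this v

theorem Complex.not_surjective_of_re_mul_eq_zero {α : Type*} {D : α → ℂ} {c : ℂ} (hc : c ≠ 0)
    (h : ∀ a, (c * D a).re = 0) : ¬ Surjective D := by
  intro hD
  obtain ⟨a, ha⟩ := hD (conj c)
  have hre := h a
  rw [ha, Complex.mul_conj, Complex.ofReal_re] at hre
  exact hc (Complex.normSq_eq_zero.mp hre)

section MulConjDeriv

variable {E : Type*} [AddCommGroup E] [Module ℂ E] (p q : ℂ) (F G : E →ₗ[ℂ] ℂ)

def mulConjDeriv (v : E) : ℂ := conj q * F v + p * conj (G v)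

variable {p q F G}

theorem not_surjective_mulConjDeriv (h : ∀ v, q * F v + p * G v = 0) :
    ¬ Surjective (mulConjDeriv p q F G) := by
  by_cases hpq : conj p * q = 0
  · have hzero : ∀ v, mulConjDeriv p q F G v = 0 := fun v => by
      rcases mul_eq_zero.mp hpq with hp | rfl
      · obtain rfl : p = 0 := by simpa using hp
        simpa [mulConjDeriv] using h v
      · simpa [mulConjDeriv] using h v
    intro hD
    obtain ⟨v, hv⟩ := hD 1
    simp [hzero] at hv
  · refine Complex.not_surjective_of_re_mul_eq_zero hpq fun v => ?_
    have key : conj p * q * mulConjDeriv p q F G v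
        = p * conj p * (q * conj (G v) - conj q * G v) := by
      unfold mulConjDeriv; linear_combination conj p * conj q * h v
    rw [key, Complex.mul_conj]
    simp [Complex.mul_re, Complex.sub_re]

theorem forall_eq_zero_of_not_surjective_mulConjDeriv (hpq : p * conj q = 0)
    (h : ¬ Surjective (mulConjDeriv p q F G)) (v : E) : q * F v + p * G v = 0 := by
  rcases mul_eq_zero.mp hpq with rfl | hq
  · have hD : mulConjDeriv 0 q F G = ⇑(conj q • F) := by ext; simp [mulConjDeriv]
    have : conj q • F = 0 := (LinearMap.surjective_or_eq_zero _).resolve_left (hD ▸ h)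
    simpa using congr($this v)
  · obtain rfl : q = 0 := by simpa using hq
    have hD : mulConjDeriv p 0 F G = conj ∘ ⇑(conj p • G) := by ext; simp [mulConjDeriv]
    have : conj p • G = 0 := (LinearMap.surjective_or_eq_zero _).resolve_left fun hs =>
      h (hD ▸ (star_involutive.surjective.comp hs))
    simpa using congr($this v)

end MulConjDeriv

variable {E : Type*} [NormedAddCommGroup E] [NormedSpace ℂ E] {f g : E → ℂ} {z : E}

theorem fderiv_mul_conj (hf : DifferentiableAt ℂ f z) (hg : DifferentiableAt ℂ g z) :
    ⇑(fderiv ℝ (fun w => f w * conj (g w)) z) =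
      mulConjDeriv (f z) (g z) (fderiv ℂ f z : E →ₗ[ℂ] ℂ) (fderiv ℂ g z) := by
  have h : HasFDerivAt (fun w => f w * conj (g w)) _ z :=
    (hf.hasFDerivAt.restrictScalars ℝ).mul (hg.hasFDerivAt.restrictScalars ℝ).star
  ext v
  rw [h.fderiv]
  simp [mulConjDeriv, add_comm]

theorem fderiv_mul_apply (hf : DifferentiableAt ℂ f z) (hg : DifferentiableAt ℂ g z) (v : E) :
    fderiv ℂ (fun w => f w * g w) z v = g z * fderiv ℂ f z v + f z * fderiv ℂ g z v := by
  simp [fderiv_fun_mul hf hg, add_comm]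

theorem stmt_3_general (n : ℕ) (f g : (Fin n → ℂ) → ℂ)
    (hf : Differentiable ℂ f) (hg : Differentiable ℂ g)
    (hicv : {z | ¬ Function.Surjective (fderiv ℝ (fun w => f w * (starRingEnd ℂ) (g w)) z)}
      ⊆ {z | f z * (starRingEnd ℂ) (g z) = 0}) :
    {z | ¬ Function.Surjective (fderiv ℝ (fun w => f w * (starRingEnd ℂ) (g w)) z)} =
      {z | ∀ i, fderiv ℂ (fun w => f w * g w) z (Pi.single i 1) = 0} := by
  ext z
  simp only [Set.mem_ofPred_eq, LinearMapClass.forall_apply_single_one_eq_zero_iff,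
    fderiv_mul_apply (hf z) (hg z)]
  constructor
  · intro hns
    have hpq := hicv hns
    rw [fderiv_mul_conj (hf z) (hg z)] at hns
    simpa using forall_eq_zero_of_not_surjective_mulConjDeriv hpq hns
  · intro h
    rw [fderiv_mul_conj (hf z) (hg z)]
    exact not_surjective_mulConjDeriv (by simpa using h)

/-- If `f·conj(g)` has an isolated critical value at `0`, then the critical set
of the real-analytic map `f·conj(g)` equals the critical set of the holomorphic product `fg`,
i.e. `{z | ∂(fg)/∂zᵢ(z) = 0 for all i}`; in particular it is a complex analytic variety. -/
theorem stmt_3 (n : ℕ) (f g : (Fin n → ℂ) → ℂ)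
    (hf : Differentiable ℂ f) (hg : Differentiable ℂ g) (hf0 : f 0 = 0) (hg0 : g 0 = 0)
    (hicv : {z | ¬ Function.Surjective (fderiv ℝ (fun w => f w * (starRingEnd ℂ) (g w)) z)}
      ⊆ {z | f z * (starRingEnd ℂ) (g z) = 0}) :
    {z | ¬ Function.Surjective (fderiv ℝ (fun w => f w * (starRingEnd ℂ) (g w)) z)} =
      {z | ∀ i, fderiv ℂ (fun w => f w * g w) z (Pi.single i 1) = 0} :=
  stmt_3_general n f g hf hg hicv
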